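/- Let n, t with 1 ≤ t < n−1, s : Fin n → ℝ nonnegative nonincreasing, and set ξ* = min(⌊(2n−t)/(n−t)⌋, t+1). Then the minimum of ∑_{i=1}^n v i over all nonnegative vectors v that are feasible (for every j and every t-subset A with j ∉ A, ∑_{i∉A} v i ≥ s j) equals ∑_{i=1}^{ξ*−1} s i + ((2n−t)/(n−t) − ξ*) · s_{ξ*}. -/

import Mathlib

/-!
Write `m = n - t` and `X_W i = max (s i - W) 0`. Every feasible `v` admits a level `W` (the
smallest total noise of `m` parties) with `(n / m) W + ∑ X_W ≤ ∑ v`. The claimed value is a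
combination of the `s i` with weights in `[0, 1]` summing to `n / m`, so bounding each `s i` by
`W + X_W i` shows it is below `(n / m) W + ∑ X_W` for every `W`. Equality is attained by the noise
`s k / m` for parties `i ≥ k` and `s i - (m - 1) s k / m` for `i < k`, where `k = ξ* - 1`.
-/

open Finset

namespace ThresholdNoise

variable {ι : Type*}

-- `B` plays the role of `Aᶜ` for a coalition `A` of `t` parties, so `m = n - t`.
def IsFeasible (m : ℕ) (s v : ι → ℝ) : Prop :=
  ∀ B : Finset ι, #B = m → ∀ j ∈ B, s j ≤ ∑ i ∈ B, v i

theorem isFeasible_card_sub_iff [Fintype ι] [DecidableEq ι] {t : ℕ} (ht : t ≤ Fintype.card ι)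
    {s v : ι → ℝ} :
    IsFeasible (Fintype.card ι - t) s v ↔
      ∀ (j : ι) (A : Finset ι), #A = t → j ∉ A → s j ≤ ∑ i ∈ Aᶜ, v i := by
  constructor
  · intro h j A hA hjA
    exact h Aᶜ (by rw [card_compl, hA]) j (mem_compl.2 hjA)
  · intro h B hB j hj
    simpa using h j Bᶜ (by rw [card_compl, hB]; omega) (by simpa using hj)

theorem sum_add_mul_le_card_add_mul_add_sum_max [Fintype ι] (s : ι → ℝ) {S : Finset ι} {k : ι}
    (hk : k ∉ S) {α : ℝ} (hα0 : 0 ≤ α) (hα1 : α ≤ 1) (W : ℝ) :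
    ∑ i ∈ S, s i + α * s k ≤ (#S + α) * W + ∑ i, max (s i - W) 0 := by
  have hle : ∀ i, s i ≤ W + max (s i - W) 0 := fun i => by linarith [le_max_left (s i - W) 0]
  have hX0 : ∀ i, 0 ≤ max (s i - W) 0 := fun i => le_max_right _ _
  calc ∑ i ∈ S, s i + α * s k
      ≤ ∑ i ∈ S, (W + max (s i - W) 0) + α * (W + max (s k - W) 0) :=
        add_le_add (sum_le_sum fun i _ => hle i) (mul_le_mul_of_nonneg_left (hle k) hα0)
    _ = (#S + α) * W + (∑ i ∈ S, max (s i - W) 0 + α * max (s k - W) 0) := by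
        rw [sum_add_distrib, sum_const, nsmul_eq_mul]; ring
    _ ≤ (#S + α) * W + ∑ i ∈ cons k S hk, max (s i - W) 0 := by
        rw [sum_cons]; nlinarith [hX0 k]
    _ ≤ (#S + α) * W + ∑ i, max (s i - W) 0 := by
        grw [sum_le_univ_sum_of_nonneg hX0]

-- Take `B` of minimal `v`-mass `W` and let `b ∈ B` carry the largest `v b`. Exchanging `b` for
-- some `k ∉ B` gives an `m`-set of mass `W - v b + v k`, which is at least `W` by minimality
-- and at least `s k` by feasibility.
theorem IsFeasible.exists_le_sum [Fintype ι] [DecidableEq ι] {m : ℕ} (hm0 : 0 < m)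
    (hm : m ≤ Fintype.card ι) {s v : ι → ℝ} (hv : IsFeasible m s v) :
    ∃ W : ℝ, (Fintype.card ι / m : ℝ) * W + ∑ i, max (s i - W) 0 ≤ ∑ i, v i := by
  obtain ⟨B, hBmem, hBmin⟩ := exists_min_image (powersetCard m univ) (fun B => ∑ i ∈ B, v i)
    (powersetCard_nonempty.2 (by simpa using hm))
  have hB : #B = m := (mem_powersetCard.1 hBmem).2
  obtain ⟨b, hb, hbmax⟩ := exists_max_image B v (card_pos.1 (hB ▸ hm0))
  set W := ∑ i ∈ B, v i
  have hexchange : ∀ k ∉ B, W ≤ W - v b + v k ∧ s k ≤ W - v b + v k := by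
    intro k hk
    have hkC : k ∉ B.erase b := fun h => hk (mem_of_mem_erase h)
    have hC : #(insert k (B.erase b)) = m := by
      rw [card_insert_of_notMem hkC, card_erase_of_mem hb, hB]; omega
    have hsum : ∑ i ∈ insert k (B.erase b), v i = W - v b + v k := by
      rw [sum_insert hkC, sum_erase_eq_sub hb]; ring
    exact ⟨hsum ▸ hBmin _ (mem_powersetCard.2 ⟨subset_univ _, hC⟩),
      hsum ▸ hv _ hC k (mem_insert_self _ _)⟩
  have houtside : ∀ k ∈ Bᶜ, v b + max (s k - W) 0 ≤ v k := fun k hk => by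
    obtain ⟨h1, h2⟩ := hexchange k (mem_compl.1 hk)
    rw [← le_sub_iff_add_le']
    exact max_le (by linarith) (by linarith)
  have hinside : ∑ i ∈ B, max (s i - W) 0 = 0 :=
    sum_eq_zero fun j hj => max_eq_right (by linarith [hv B hB j hj])
  have hWle : W ≤ m * v b := by simpa [hB] using sum_le_card_nsmul B v (v b) hbmax
  have hcard : (#Bᶜ : ℝ) = Fintype.card ι - m := by
    rw [card_compl, hB, Nat.cast_sub hm]
  have hm' : (0 : ℝ) < m := by exact_mod_cast hm0
  refine ⟨W, ?_⟩
  calc (Fintype.card ι / m : ℝ) * W + ∑ i, max (s i - W) 0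
      = W + (Fintype.card ι - m) * (W / m) + ∑ i ∈ Bᶜ, max (s i - W) 0 := by
        rw [← sum_add_sum_compl B, hinside]; field_simp; ring
    _ ≤ W + (Fintype.card ι - m) * v b + ∑ i ∈ Bᶜ, max (s i - W) 0 := by
        gcongr
        · simpa using (Nat.cast_le (α := ℝ)).2 hm
        · rwa [div_le_iff₀ hm', mul_comm]
    _ = W + ∑ i ∈ Bᶜ, (v b + max (s i - W) 0) := by
        rw [sum_add_distrib, sum_const, nsmul_eq_mul, hcard]; ring
    _ ≤ W + ∑ i ∈ Bᶜ, v i := by gcongr with k hk; exact houtside k hk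
    _ = ∑ i, v i := sum_add_sum_compl B v

theorem exists_isFeasible_sum_eq {n m : ℕ} (hm : 0 < m) {s : Fin n → ℝ} (hs : Antitone s)
    (k : Fin n) (hsk : 0 ≤ s k) :
    ∃ v : Fin n → ℝ, (∀ i, 0 ≤ v i) ∧ IsFeasible m s v ∧
      ∑ i, v i = ∑ i ∈ Iio k, s i + ((n : ℝ) / m - k) * s k := by
  have hm' : (0 : ℝ) < m := by exact_mod_cast hm
  set y := s k / m
  have hsk_eq : s k = m * y := (mul_div_cancel₀ _ hm'.ne').symm
  set v : Fin n → ℝ := fun i => if i < k then s i - (m - 1) * y else y with hv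
  have hyv : ∀ i, y ≤ v i := by
    intro i
    simp only [hv]
    split_ifs with h
    · linarith [hs h.le]
    · exact le_rfl
  refine ⟨v, fun i => (div_nonneg hsk hm'.le).trans (hyv i), ?_, ?_⟩
  · intro B hB j hj
    have hrest : ((m : ℝ) - 1) * y ≤ ∑ i ∈ B.erase j, v i := by
      simpa [card_erase_of_mem hj, hB, Nat.cast_sub hm] using
        card_nsmul_le_sum (B.erase j) v y fun i _ => hyv i
    have hvj : s j ≤ v j + (m - 1) * y := by
      simp only [hv]
      split_ifs with h
      · linarith
      · linarith [hs (not_lt.1 h)]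
    rw [← add_sum_erase B v hj]
    linarith
  · rw [sum_ite, filter_gt_eq_Iio, sum_sub_distrib, sum_const, sum_const, Fin.card_Iio]
    simp only [not_lt, filter_le_eq_Ici, Fin.card_Ici, nsmul_eq_mul]
    rw [Nat.cast_sub k.is_lt.le, hsk_eq]
    field_simp
    ring

-- `(2n - t) / (n - t) = n / (n - t) + 1`, and `n / (n - t) ≤ t + 1` because `t + 1 ≤ n`.
theorem bounds_of_eq_min_div_sub {n t ξ : ℕ} (htn : t < n)
    (hξ : ξ = min ((2 * n - t) / (n - t)) (t + 1)) :
    1 ≤ ξ ∧ (ξ : ℝ) - 1 ≤ n / (n - t) ∧ (n : ℝ) / (n - t) ≤ ξ := by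
  have hnt : 0 < n - t := by omega
  have hq : (2 * n - t) / (n - t) = n / (n - t) + 1 := by
    rw [show 2 * n - t = n + (n - t) by omega, Nat.add_div_right _ hnt]
  rw [hq] at hξ
  have hξ1 : 1 ≤ ξ := by rw [hξ]; exact le_min (Nat.le_add_left 1 _) (Nat.le_add_left 1 t)
  have hξq : ξ - 1 ≤ n / (n - t) := by rw [hξ]; exact Nat.sub_le_of_le_add (min_le_left _ _)
  have hcast : ((n - t : ℕ) : ℝ) = n - t := Nat.cast_sub htn.le
  have hd : (0 : ℝ) < n - t := by rw [← hcast]; exact_mod_cast hnt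
  refine ⟨hξ1, ?_, ?_⟩
  · calc (ξ : ℝ) - 1 = ((ξ - 1 : ℕ) : ℝ) := by rw [Nat.cast_sub hξ1, Nat.cast_one]
      _ ≤ ((n / (n - t) : ℕ) : ℝ) := by exact_mod_cast hξq
      _ ≤ n / (n - t) := by rw [← hcast]; exact Nat.cast_div_le
  · rw [div_le_iff₀ hd]
    rcases le_total (n / (n - t)) t with h | h
    · have hlt : n < (n / (n - t) + 1) * (n - t) := by
        rw [add_mul, one_mul]; exact Nat.lt_div_mul_add hnt
      rw [hξ, min_eq_left (by omega), ← hcast]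
      exact_mod_cast hlt.le
    · rw [hξ, min_eq_right (by omega)]
      have ht : (t : ℝ) + 1 ≤ n := by exact_mod_cast htn
      push_cast
      nlinarith [mul_nonneg (Nat.cast_nonneg t : (0 : ℝ) ≤ t) (sub_nonneg.2 ht)]

end ThresholdNoise

open ThresholdNoise in
theorem stmt7 (n t : ℕ) (htn : t + 1 < n)
    (s : Fin n → ℝ) (hs0 : ∀ i, 0 ≤ s i)
    (hsmono : ∀ i j : Fin n, i ≤ j → s j ≤ s i)
    (ξs : ℕ) (hξ : ξs = min ((2 * n - t) / (n - t)) (t + 1)) :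
    IsLeast {x : ℝ | ∃ v : Fin n → ℝ, (∀ i, 0 ≤ v i) ∧
        (∀ (j : Fin n) (A : Finset (Fin n)), A.card = t → j ∉ A →
          s j ≤ ∑ i ∈ Aᶜ, v i) ∧
        x = ∑ i, v i}
      ((∑ j ∈ Finset.univ.filter (fun j : Fin n => j.val < ξs - 1), s j) +
        ((2 * (n : ℝ) - t) / ((n : ℝ) - t) - (ξs : ℝ)) *
          s ⟨ξs - 1, by
            have h : ξs ≤ t + 1 := by rw [hξ]; exact min_le_right _ _
            omega⟩) := by
  obtain ⟨hξ1, hξ_le, hle_ξ⟩ := bounds_of_eq_min_div_sub (by omega) hξ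
  set k : Fin n := ⟨ξs - 1, _⟩
  have hk : ((k : ℕ) : ℝ) = ξs - 1 := by simp [k, Nat.cast_sub hξ1]
  have hIio : univ.filter (fun j : Fin n => j.val < ξs - 1) = Iio k := by
    ext j; simp [k, Fin.lt_def]
  have hm : ((n - t : ℕ) : ℝ) = n - t := Nat.cast_sub (by omega)
  have hcoef : (2 * (n : ℝ) - t) / ((n : ℝ) - t) - ξs = n / (n - t) - k := by
    have : (n : ℝ) - t ≠ 0 := by rw [← hm]; exact_mod_cast (by omega : n - t ≠ 0)
    rw [hk]; field_simp; ring
  have hfeas (v : Fin n → ℝ) : IsFeasible (n - t) s v ↔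
      ∀ (j : Fin n) (A : Finset (Fin n)), #A = t → j ∉ A → s j ≤ ∑ i ∈ Aᶜ, v i := by
    simpa using isFeasible_card_sub_iff (ι := Fin n) (s := s) (v := v) (by simp; omega)
  rw [hIio, hcoef]
  constructor
  · obtain ⟨v, hv0, hv, hsum⟩ := exists_isFeasible_sum_eq (m := n - t) (by omega) hsmono k (hs0 k)
    exact ⟨v, hv0, (hfeas v).1 hv, by rw [hsum, hm]⟩
  · rintro x ⟨v, -, hv, rfl⟩
    obtain ⟨W, hW⟩ := ((hfeas v).2 hv).exists_le_sum (by omega) (by simp)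
    rw [Fintype.card_fin] at hW
    calc ∑ i ∈ Iio k, s i + ((n : ℝ) / (n - t) - k) * s k
        ≤ (#(Iio k) + ((n : ℝ) / (n - t) - k)) * W + ∑ i, max (s i - W) 0 :=
          sum_add_mul_le_card_add_mul_add_sum_max s (by simp) (by linarith) (by linarith) W
      _ ≤ ∑ i, v i := by rwa [Fin.card_Iio, add_sub_cancel, ← hm]
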